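/- arXiv:1405.3176 — 6 statements merged into one kernel-verified Lean document; each statement's English description precedes it below -/
import Mathlib

section
/- In a scalar two-person zero-sum matrix game with payoff matrix A ∈ ℝ^{m×n}, the value val(A) := min over mixed strategies x ∈ X_m of max over mixed strategies y ∈ Y_n of xᵀAy equals max over y ∈ Y_n of min over x ∈ X_m of xᵀAy (von Neumann minimax theorem on simplices). -/
open Matrix BigOperators

lemma dot_le_of_forall_le {n : ℕ} {c y : Fin n → ℝ} {B : ℝ}
    (hy : y ∈ stdSimplex ℝ (Fin n)) (h : ∀ j, c j ≤ B) : c ⬝ᵥ y ≤ B := by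
  have h1 : c ⬝ᵥ y ≤ ∑ j, B * y j := by
    simp only [dotProduct]
    exact Finset.sum_le_sum fun j _ => mul_le_mul_of_nonneg_right (h j) (hy.1 j)
  calc c ⬝ᵥ y ≤ ∑ j, B * y j := h1
    _ = B * ∑ j, y j := by rw [Finset.mul_sum]
    _ = B := by rw [hy.2, mul_one]

lemma le_dot_of_forall_le {n : ℕ} {c y : Fin n → ℝ} {B : ℝ}
    (hy : y ∈ stdSimplex ℝ (Fin n)) (h : ∀ j, B ≤ c j) : B ≤ c ⬝ᵥ y := by
  have h1 : ∑ j, B * y j ≤ c ⬝ᵥ y := by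
    simp only [dotProduct]
    exact Finset.sum_le_sum fun j _ => mul_le_mul_of_nonneg_right (h j) (hy.1 j)
  calc B = B * ∑ j, y j := by rw [hy.2, mul_one]
    _ = ∑ j, B * y j := by rw [Finset.mul_sum]
    _ ≤ c ⬝ᵥ y := h1

/-- von Neumann minimax theorem on simplices. -/
theorem minimax_theorem (m n : ℕ) (hm : 0 < m) (hn : 0 < n)
    (A : Matrix (Fin m) (Fin n) ℝ) :
    (⨅ x : stdSimplex ℝ (Fin m), ⨆ y : stdSimplex ℝ (Fin n), x.1 ⬝ᵥ A *ᵥ y.1)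
      = ⨆ y : stdSimplex ℝ (Fin n), ⨅ x : stdSimplex ℝ (Fin m), x.1 ⬝ᵥ A *ᵥ y.1 := by
  haveI : NeZero m := ⟨hm.ne'⟩
  haveI : NeZero n := ⟨hn.ne'⟩
  haveI hSm : Nonempty (stdSimplex ℝ (Fin m)) :=
    ⟨⟨_, ite_eq_mem_stdSimplex ℝ (0 : Fin m)⟩⟩
  haveI hSn : Nonempty (stdSimplex ℝ (Fin n)) :=
    ⟨⟨_, ite_eq_mem_stdSimplex ℝ (0 : Fin n)⟩⟩
  set F : (Fin m → ℝ) → (Fin n → ℝ) → ℝ := fun x y => x ⬝ᵥ A *ᵥ y with hF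
  -- uniform bounds
  obtain ⟨M, hM⟩ : ∃ M, ∀ i j, A i j ≤ M := by
    refine ⟨Finset.univ.sup' (Finset.univ_nonempty)
      (fun p : Fin m × Fin n => A p.1 p.2), fun i j => ?_⟩
    exact Finset.le_sup' (f := fun p : Fin m × Fin n => A p.1 p.2)
      (Finset.mem_univ (i, j))
  obtain ⟨M₀, hM₀⟩ : ∃ M₀, ∀ i j, M₀ ≤ A i j := by
    refine ⟨Finset.univ.inf' (Finset.univ_nonempty)
      (fun p : Fin m × Fin n => A p.1 p.2), fun i j => ?_⟩
    exact Finset.inf'_le (f := fun p : Fin m × Fin n => A p.1 p.2)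
      (Finset.mem_univ (i, j))
  have hFle : ∀ (x : stdSimplex ℝ (Fin m)) (y : stdSimplex ℝ (Fin n)),
      F x.1 y.1 ≤ M := by
    intro x y
    rw [hF]
    simp only
    rw [dotProduct_comm]
    refine dot_le_of_forall_le (c := A *ᵥ y.1) x.2 fun i => ?_
    exact dot_le_of_forall_le (c := A i) y.2 fun j => hM i j
  have hFge : ∀ (x : stdSimplex ℝ (Fin m)) (y : stdSimplex ℝ (Fin n)),
      M₀ ≤ F x.1 y.1 := by
    intro x y
    rw [hF]
    simp only
    rw [dotProduct_comm]
    refine le_dot_of_forall_le (c := A *ᵥ y.1) x.2 fun i => ?_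
    exact le_dot_of_forall_le (c := A i) y.2 fun j => hM₀ i j
  have bddB : ∀ y : stdSimplex ℝ (Fin n),
      BddBelow (Set.range fun x : stdSimplex ℝ (Fin m) => F x.1 y.1) := by
    intro y; exact ⟨M₀, by rintro _ ⟨x, rfl⟩; exact hFge x y⟩
  have bddA : ∀ x : stdSimplex ℝ (Fin m),
      BddAbove (Set.range fun y : stdSimplex ℝ (Fin n) => F x.1 y.1) := by
    intro x; exact ⟨M, by rintro _ ⟨y, rfl⟩; exact hFle x y⟩
  have bddg : BddAbove (Set.range fun y : stdSimplex ℝ (Fin n) =>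
      ⨅ x : stdSimplex ℝ (Fin m), F x.1 y.1) := by
    refine ⟨M, ?_⟩
    rintro _ ⟨y, rfl⟩
    exact le_trans (ciInf_le (bddB y) (Classical.arbitrary _))
      (hFle (Classical.arbitrary _) y)
  have bddh : BddBelow (Set.range fun x : stdSimplex ℝ (Fin m) =>
      ⨆ y : stdSimplex ℝ (Fin n), F x.1 y.1) := by
    refine ⟨M₀, ?_⟩
    rintro _ ⟨x, rfl⟩
    exact le_trans (hFge x (Classical.arbitrary _))
      (le_ciSup (bddA x) (Classical.arbitrary _))
  set v : ℝ := ⨆ y : stdSimplex ℝ (Fin n), ⨅ x : stdSimplex ℝ (Fin m), F x.1 y.1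
    with hv
  -- easy inequality
  have easy : v ≤ ⨅ x : stdSimplex ℝ (Fin m), ⨆ y : stdSimplex ℝ (Fin n),
      F x.1 y.1 := by
    refine le_ciInf fun x => ?_
    refine ciSup_le fun y => ?_
    exact le_trans (ciInf_le (bddB y) x) (le_ciSup (bddA x) y)
  -- hard inequality: find x* with all columns of x*ᵀA bounded by v
  have key : ∃ x : stdSimplex ℝ (Fin m), ∀ j, (x.1 ᵥ* A) j ≤ v := by
    by_contra hcon
    push_neg at hcon
    -- separation setup
    set C : Set (Fin n → ℝ) := A.vecMulLinear '' stdSimplex ℝ (Fin m) with hC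
    set D : Set (Fin n → ℝ) := ⋂ j, {z : Fin n → ℝ | z j ≤ v} with hD
    have hCconv : Convex ℝ C := (convex_stdSimplex ℝ (Fin m)).linear_image _
    have hCcomp : IsCompact C :=
      (isCompact_stdSimplex ℝ (Fin m)).image A.vecMulLinear.continuous_of_finiteDimensional
    have hDconv : Convex ℝ D := by
      refine convex_iInter fun j => ?_
      exact convex_halfSpace_le (LinearMap.isLinear (LinearMap.proj (R := ℝ) (φ := fun _ : Fin n => ℝ) j)) v
    have hDclosed : IsClosed D :=
      isClosed_iInter fun j => isClosed_le (continuous_apply j) continuous_const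
    have hmemD : ∀ z : Fin n → ℝ, z ∈ D ↔ ∀ j, z j ≤ v := by
      intro z; simp [hD, Set.mem_iInter]
    have hdisj : Disjoint C D := by
      rw [Set.disjoint_left]
      rintro a ⟨x, hx, rfl⟩ haD
      obtain ⟨j, hj⟩ := hcon ⟨x, hx⟩
      exact absurd ((hmemD _).1 haD j) (by simpa using hj.not_ge)
    obtain ⟨f, u, w, hfu, huw, hwf⟩ :=
      geometric_hahn_banach_compact_closed hCconv hCcomp hDconv hDclosed hdisj
    set c : Fin n → ℝ := fun j => f (Pi.single j 1) with hc
    have hfz : ∀ z : Fin n → ℝ, f z = ∑ j, z j * c j := by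
      intro z
      conv_lhs => rw [← Finset.univ_sum_single z]
      rw [map_sum]
      refine Finset.sum_congr rfl fun j _ => ?_
      have : Pi.single j (z j) = z j • (Pi.single j 1 : Fin n → ℝ) := by
        rw [← Pi.single_smul, smul_eq_mul, mul_one]
      rw [this, _root_.map_smul, smul_eq_mul]
    have hconstD : (fun _ : Fin n => v) ∈ D := (hmemD _).2 fun j => le_refl v
    have hwv : w < f (fun _ => v) := hwf _ hconstD
    have hcnonpos : ∀ j, c j ≤ 0 := by
      intro j
      by_contra hpos
      push_neg at hpos
      set t : ℝ := (f (fun _ => v) - w + 1) / c j with ht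
      have htpos : 0 < t := div_pos (by linarith) hpos
      have hz : ((fun _ : Fin n => v) - t • (Pi.single j 1 : Fin n → ℝ)) ∈ D := by
        refine (hmemD _).2 fun j' => ?_
        simp only [Pi.sub_apply, Pi.smul_apply, smul_eq_mul]
        have : 0 ≤ t * (Pi.single j 1 : Fin n → ℝ) j' := by
          refine mul_nonneg htpos.le ?_
          rcases eq_or_ne j' j with rfl | hne
          · simp
          · simp [Pi.single_apply, hne]
        linarith
      have hfval : f ((fun _ : Fin n => v) - t • (Pi.single j 1 : Fin n → ℝ))
          = f (fun _ => v) - t * c j := by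
        rw [map_sub, _root_.map_smul, smul_eq_mul]
      have := hwf _ hz
      rw [hfval, ht, div_mul_cancel₀ _ hpos.ne'] at this
      linarith
    set S : ℝ := ∑ j, c j with hS
    have hfconst : f (fun _ => v) = v * S := by
      rw [hfz, hS, Finset.mul_sum]
    have hSneg : S < 0 := by
      rcases lt_or_eq_of_le (Finset.sum_nonpos (fun j _ => hcnonpos j) : S ≤ 0)
        with h | h
      · exact h
      · exfalso
        have hzero : ∀ j, c j = 0 := by
          intro j
          have := (Finset.sum_eq_zero_iff_of_nonpos fun j _ => hcnonpos j).1 h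
          exact this j (Finset.mem_univ j)
        obtain ⟨x0⟩ := hSm
        have ha : A.vecMulLinear x0.1 ∈ C := ⟨x0.1, x0.2, rfl⟩
        have h1 : f (A.vecMulLinear x0.1) = 0 := by
          rw [hfz]; simp [hzero]
        have h2 : f (fun _ => v) = 0 := by
          rw [hfz]; simp [hzero]
        have := hfu _ ha
        rw [h1] at this
        rw [h2] at hwv
        linarith
    -- construct the strategy y*
    set ystar : Fin n → ℝ := fun j => c j / S with hystar
    have hymem : ystar ∈ stdSimplex ℝ (Fin n) := by
      constructor
      · intro j
        exact div_nonneg_of_nonpos (hcnonpos j) hSneg.le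
      · rw [hystar]
        simp only
        rw [← Finset.sum_div, ← hS, div_self hSneg.ne]
    have hbound : ∀ x : stdSimplex ℝ (Fin m), u / S < F x.1 ystar := by
      intro x
      have hfa : f (A.vecMulLinear x.1) < u := hfu _ ⟨x.1, x.2, rfl⟩
      have hFeq : F x.1 ystar = f (A.vecMulLinear x.1) / S := by
        rw [hF]
        simp only
        rw [dotProduct_mulVec, hfz]
        simp only [Matrix.vecMulLinear_apply]
        rw [Finset.sum_div]
        refine Finset.sum_congr rfl fun j _ => ?_
        rw [hystar]
        ring
      rw [hFeq]
      rw [div_lt_div_right_of_neg hSneg]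
      exact hfa
    have hvlt : v < u / S := by
      rw [lt_div_iff_of_neg hSneg]
      rw [hfconst] at hwv
      linarith [mul_comm v S]
    have hge : u / S ≤ ⨅ x : stdSimplex ℝ (Fin m), F x.1 ystar :=
      le_ciInf fun x => (hbound x).le
    have hle : (⨅ x : stdSimplex ℝ (Fin m), F x.1 ystar) ≤ v :=
      le_ciSup bddg ⟨ystar, hymem⟩
    linarith
  obtain ⟨xs, hxs⟩ := key
  have hard : (⨅ x : stdSimplex ℝ (Fin m), ⨆ y : stdSimplex ℝ (Fin n),
      F x.1 y.1) ≤ v := by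
    refine le_trans (ciInf_le bddh xs) ?_
    refine ciSup_le fun y => ?_
    rw [hF]
    simp only
    rw [dotProduct_mulVec]
    exact dot_le_of_forall_le y.2 hxs
  exact le_antisymm hard easy
end

section
/- If a new row b is appended to each matrix A(ℓ) of a multicriteria game, where b_ℓ = Σ_{i=1}^m α_i A(ℓ)^{i·} is the same fixed convex combination (α ∈ X_m) of the rows of A(ℓ) for every ℓ, then the set of Pareto-optimal security level vectors is unchanged: VPOSS_k(A_r) = VPOSS_k(A). -/
open Matrix BigOperators

/-- Security level vector of strategy `x` in a multicriteria game. -/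
noncomputable def secVec {k m : ℕ} {n : Fin k → ℕ}
    (A : ∀ ℓ, Matrix (Fin m) (Fin (n ℓ)) ℝ) (x : Fin m → ℝ) : Fin k → ℝ :=
  fun ℓ => ⨆ j, (x ᵥ* A ℓ) j

/-- The set of Pareto-optimal security level vectors. -/
noncomputable def VPOSS {k m : ℕ} {n : Fin k → ℕ}
    (A : ∀ ℓ, Matrix (Fin m) (Fin (n ℓ)) ℝ) : Set (Fin k → ℝ) :=
  {z | (∃ x ∈ stdSimplex ℝ (Fin m), z = secVec A x) ∧
       ∀ x ∈ stdSimplex ℝ (Fin m), secVec A x ≤ z → secVec A x = z}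

/-- appending the same convex combination of rows to every matrix
leaves the set of Pareto-optimal security level vectors unchanged. -/
theorem VPOSS_row_dominance (k m : ℕ) (hm : 0 < m) (n : Fin k → ℕ) (hn : ∀ ℓ, 0 < n ℓ)
    (A : ∀ ℓ, Matrix (Fin m) (Fin (n ℓ)) ℝ)
    (α : Fin m → ℝ) (hα : α ∈ stdSimplex ℝ (Fin m))
    (Ar : ∀ ℓ, Matrix (Fin (m + 1)) (Fin (n ℓ)) ℝ)
    (hAr : ∀ ℓ i j, Ar ℓ i j =
      if h : (i : ℕ) < m then A ℓ ⟨i, h⟩ j else ∑ i', α i' * A ℓ i' j) :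
    VPOSS Ar = VPOSS A := by
  obtain ⟨hα0, hα1⟩ := hα
  have hcast : ∀ ℓ (i : Fin m) j, Ar ℓ (Fin.castSucc i) j = A ℓ i j := by
    intro ℓ i j
    rw [hAr, dif_pos (show ((Fin.castSucc i : Fin (m+1)) : ℕ) < m by simp)]
    congr 1
  have hlast : ∀ ℓ j, Ar ℓ (Fin.last m) j = ∑ i', α i' * A ℓ i' j := by
    intro ℓ j
    rw [hAr, dif_neg (by simp)]
  -- forward transfer
  have h1 : ∀ x ∈ stdSimplex ℝ (Fin (m+1)), ∃ y ∈ stdSimplex ℝ (Fin m),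
      secVec A y = secVec Ar x := by
    intro x ⟨hx0, hx1⟩
    refine ⟨fun i => x (Fin.castSucc i) + x (Fin.last m) * α i, ⟨?_, ?_⟩, ?_⟩
    · intro i
      have := hx0 (Fin.castSucc i); have := hx0 (Fin.last m); have := hα0 i
      positivity
    · rw [Finset.sum_add_distrib, ← Finset.mul_sum, hα1, mul_one]
      rw [Fin.sum_univ_castSucc] at hx1
      linarith
    · funext ℓ
      unfold secVec
      congr 1
      funext j
      simp only [Matrix.vecMul, dotProduct]
      rw [Fin.sum_univ_castSucc]
      simp only [hcast, hlast, add_mul, Finset.sum_add_distrib, Finset.mul_sum]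
      ring_nf
  have h2 : ∀ y ∈ stdSimplex ℝ (Fin m), ∃ x ∈ stdSimplex ℝ (Fin (m+1)),
      secVec Ar x = secVec A y := by
    intro y ⟨hy0, hy1⟩
    refine ⟨Fin.snoc y 0, ⟨?_, ?_⟩, ?_⟩
    · intro i
      induction i using Fin.lastCases with
      | last => simp
      | cast i => simpa using hy0 i
    · rw [Fin.sum_univ_castSucc]
      simpa using hy1
    · funext ℓ
      unfold secVec
      congr 1
      funext j
      simp only [Matrix.vecMul, dotProduct]
      rw [Fin.sum_univ_castSucc]
      simp [hcast, hlast]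
  ext z
  constructor
  · rintro ⟨⟨x, hx, rfl⟩, hpar⟩
    obtain ⟨y, hy, hyx⟩ := h1 x hx
    refine ⟨⟨y, hy, hyx.symm⟩, ?_⟩
    intro y' hy' hle
    obtain ⟨x', hx', hxy'⟩ := h2 y' hy'
    rw [← hxy'] at hle ⊢
    exact hpar x' hx' hle
  · rintro ⟨⟨y, hy, rfl⟩, hpar⟩
    obtain ⟨x, hx, hxy⟩ := h2 y hy
    refine ⟨⟨x, hx, hxy.symm⟩, ?_⟩
    intro x' hx' hle
    obtain ⟨y', hy', hyx'⟩ := h1 x' hx'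
    rw [← hyx'] at hle ⊢
    exact hpar y' hy' hle
end

section
/- If a new column H dominated by a convex combination of the columns of A(ℓ) is appended to A(ℓ) (i.e., there exist α_j ≥ 0 summing to 1 with Σ_j α_j A(ℓ)^{·j} ≥ H componentwise), then for every x ∈ X_m the security level vector is unchanged: v_I(x, A_{c(ℓ)}) = v_I(x, A). Consequently VPOSS_k(A_{c(ℓ)}) = VPOSS_k(A). -/
open Matrix BigOperators

/-- appending to criterion `ℓ₀` a column `H` dominated by a convex
combination of the columns of `A ℓ₀` changes neither the security level vectors
nor the set of Pareto-optimal security level vectors. -/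
theorem VPOSS_column_dominance (k m : ℕ) (hm : 0 < m) (n : Fin k → ℕ) (hn : ∀ ℓ, 0 < n ℓ)
    (A : ∀ ℓ, Matrix (Fin m) (Fin (n ℓ)) ℝ)
    (ℓ₀ : Fin k) (H : Fin m → ℝ) (α : Fin (n ℓ₀) → ℝ)
    (hα : α ∈ stdSimplex ℝ (Fin (n ℓ₀)))
    (hdom : ∀ i, H i ≤ ∑ j, α j * A ℓ₀ i j)
    (Ac : ∀ ℓ, Matrix (Fin m) (Fin (if ℓ = ℓ₀ then n ℓ₀ + 1 else n ℓ)) ℝ)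
    (hAc_other : ∀ ℓ (h : ℓ ≠ ℓ₀) i (j : Fin (if ℓ = ℓ₀ then n ℓ₀ + 1 else n ℓ)),
      Ac ℓ i j = A ℓ i (Fin.cast (by simp [h]) j))
    (hAc_main : ∀ i (j : Fin (if ℓ₀ = ℓ₀ then n ℓ₀ + 1 else n ℓ₀)),
      Ac ℓ₀ i j = if hj : (j : ℕ) < n ℓ₀ then A ℓ₀ i ⟨j, hj⟩ else H i) :
    (∀ x ∈ stdSimplex ℝ (Fin m), secVec Ac x = secVec A x) ∧ VPOSS Ac = VPOSS A := by
  have key : ∀ x ∈ stdSimplex ℝ (Fin m), secVec Ac x = secVec A x := by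
    intro x hx
    obtain ⟨hx0, hx1⟩ := hx
    funext ℓ
    unfold secVec
    by_cases hℓ : ℓ = ℓ₀
    · subst hℓ
      haveI : Nonempty (Fin (n ℓ)) := ⟨⟨0, hn ℓ⟩⟩
      have hcast : n ℓ + 1 = (if ℓ = ℓ then n ℓ + 1 else n ℓ) := by simp
      set e : Fin (n ℓ + 1) ≃ Fin (if ℓ = ℓ then n ℓ + 1 else n ℓ) := finCongr hcast with he
      rw [← e.surjective.iSup_comp (g := fun j => (x ᵥ* Ac ℓ) j)]
      set f : Fin (n ℓ) → ℝ := fun j => (x ᵥ* A ℓ) j with hf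
      have hbdd : BddAbove (Set.range f) := (Set.finite_range f).bddAbove
      have hval : ∀ j : Fin (n ℓ + 1), (x ᵥ* Ac ℓ) (e j)
          = if hj : (j : ℕ) < n ℓ then f ⟨j, hj⟩ else ∑ i, x i * H i := by
        intro j
        have hej : ((e j : Fin (if ℓ = ℓ then n ℓ + 1 else n ℓ)) : ℕ) = (j : ℕ) := by
          simp [he]
        simp only [vecMul, dotProduct, hf]
        by_cases hj : (j : ℕ) < n ℓ
        · rw [dif_pos hj]
          refine Finset.sum_congr rfl fun i _ => ?_
          rw [hAc_main i (e j)]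
          rw [dif_pos (hej ▸ hj)]
          congr 1
        · rw [dif_neg hj]
          refine Finset.sum_congr rfl fun i _ => ?_
          rw [hAc_main i (e j)]
          rw [dif_neg (hej ▸ hj)]
      have hc : (∑ i, x i * H i) ≤ ⨆ j, f j := by
        have h1 : (∑ i, x i * H i) ≤ ∑ i, x i * ∑ j, α j * A ℓ i j :=
          Finset.sum_le_sum fun i _ => mul_le_mul_of_nonneg_left (hdom i) (hx0 i)
        have h2 : (∑ i, x i * ∑ j, α j * A ℓ i j) = ∑ j, α j * f j := by
          simp only [hf, vecMul, dotProduct, Finset.mul_sum]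
          rw [Finset.sum_comm]
          exact Finset.sum_congr rfl fun j _ => Finset.sum_congr rfl fun i _ => by ring
        have h3 : (∑ j, α j * f j) ≤ ∑ j, α j * (⨆ j, f j) :=
          Finset.sum_le_sum fun j _ =>
            mul_le_mul_of_nonneg_left (le_ciSup hbdd j) (hα.1 j)
        have h4 : (∑ j, α j * (⨆ j, f j)) = ⨆ j, f j := by
          rw [← Finset.sum_mul, hα.2, one_mul]
        linarith
      refine le_antisymm (ciSup_le fun j => ?_) (ciSup_le fun j => ?_)
      · rw [hval j]
        by_cases hj : (j : ℕ) < n ℓ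
        · rw [dif_pos hj]; exact le_ciSup hbdd _
        · rw [dif_neg hj]; exact hc
      · have hcs : f j = (x ᵥ* Ac ℓ) (e (Fin.castSucc j)) := by
          rw [hval]
          rw [dif_pos (show ((Fin.castSucc j : Fin (n ℓ + 1)) : ℕ) < n ℓ from j.isLt)]
          rfl
        rw [hcs]
        exact le_ciSup (f := fun j => (x ᵥ* Ac ℓ) (e j))
          ((Set.finite_range _).bddAbove) (Fin.castSucc j)
    · have hcast : n ℓ = (if ℓ = ℓ₀ then n ℓ₀ + 1 else n ℓ) := by simp [hℓ]
      set e : Fin (n ℓ) ≃ Fin (if ℓ = ℓ₀ then n ℓ₀ + 1 else n ℓ) := finCongr hcast with he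
      rw [← e.surjective.iSup_comp (g := fun j => (x ᵥ* Ac ℓ) j)]
      refine iSup_congr fun j => ?_
      simp only [vecMul, dotProduct]
      refine Finset.sum_congr rfl fun i _ => ?_
      rw [hAc_other ℓ hℓ i (e j)]
      congr 1
  refine ⟨key, ?_⟩
  ext z
  simp only [VPOSS, Set.mem_setOf_eq]
  constructor
  · rintro ⟨⟨x, hx, hz⟩, hmin⟩
    refine ⟨⟨x, hx, by rw [hz, key x hx]⟩, fun y hy hle => ?_⟩
    rw [← key y hy] at hle ⊢
    exact hmin y hy hle
  · rintro ⟨⟨x, hx, hz⟩, hmin⟩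
    refine ⟨⟨x, hx, by rw [hz, key x hx]⟩, fun y hy hle => ?_⟩
    rw [key y hy] at hle ⊢
    exact hmin y hy hle
end

section
/- (Ghose's characterization) A strategy x* ∈ X_m is a Pareto-optimal security strategy of the k-criteria game A = (A(1),…,A(k)) if and only if there exists α ∈ X_k^> (strictly positive weights summing to 1) such that x* minimizes over x ∈ X_m the quantity Σ_ℓ α_ℓ max_{y_ℓ ∈ Y_{n_ℓ}} xᵀA(ℓ)y_ℓ. -/
open Matrix BigOperators

/-- Security level of `x` in criterion `ℓ`: the best response payoff of player II. -/
noncomputable def secLev {k m : ℕ} {n : Fin k → ℕ}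
    (A : ∀ ℓ, Matrix (Fin m) (Fin (n ℓ)) ℝ) (x : Fin m → ℝ) : Fin k → ℝ :=
  fun ℓ => ⨆ y : stdSimplex ℝ (Fin (n ℓ)), x ⬝ᵥ A ℓ *ᵥ y.1

/-- `x*` is a Pareto-optimal security strategy. -/
noncomputable def IsPOSS {k m : ℕ} {n : Fin k → ℕ}
    (A : ∀ ℓ, Matrix (Fin m) (Fin (n ℓ)) ℝ) (xstar : Fin m → ℝ) : Prop :=
  xstar ∈ stdSimplex ℝ (Fin m) ∧
    ¬ ∃ x ∈ stdSimplex ℝ (Fin m), secLev A x ≤ secLev A xstar ∧ secLev A x ≠ secLev A xstar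

open Finset
open scoped InnerProductSpace

section Farkas
variable {E : Type*} [NormedAddCommGroup E] [InnerProductSpace ℝ E] [FiniteDimensional ℝ E]
variable {ι : Type*} [Fintype ι] [DecidableEq ι]

/-- Conic Carathéodory: any nonnegative combination is a nonnegative combination over a
linearly independent subfamily. -/
lemma carath_cone (a : ι → E) (s : Finset ι) :
    ∀ lam : ι → ℝ, (∀ i ∈ s, 0 ≤ lam i) →
      ∃ t, t ⊆ s ∧ LinearIndependent ℝ (fun i : {x // x ∈ t} => a i) ∧
        ∃ mu : ι → ℝ, (∀ i ∈ t, 0 ≤ mu i) ∧ ∑ i ∈ t, mu i • a i = ∑ i ∈ s, lam i • a i := by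
  induction s using Finset.strongInduction with
  | _ s ih =>
    intro lam hlam
    by_cases hli : LinearIndependent ℝ (fun i : {x // x ∈ s} => a i)
    · exact ⟨s, subset_rfl, hli, lam, hlam, rfl⟩
    · obtain ⟨g, hg0, i0, hgi0⟩ := Fintype.not_linearIndependent_iff.mp hli
      -- extend g to ι
      set ghat : ι → ℝ := fun i => if h : i ∈ s then g ⟨i, h⟩ else 0 with hghat
      have hghat0 : ∑ i ∈ s, ghat i • a i = 0 := by
        rw [← Finset.sum_coe_sort s (fun i => ghat i • a i)]
        rw [← hg0]
        exact Finset.sum_congr rfl (fun i _ => by simp [hghat, i.2])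
      have hne : ghat (i0 : ι) ≠ 0 := by simp [hghat, i0.2, hgi0]
      -- get a version with a positive entry
      obtain ⟨gg, hgg0, i1, hi1s, hi1pos⟩ :
          ∃ gg : ι → ℝ, ∑ i ∈ s, gg i • a i = 0 ∧ ∃ i ∈ s, 0 < gg i := by
        rcases lt_or_gt_of_ne hne with hneg | hpos
        · refine ⟨-ghat, by simpa using congrArg Neg.neg hghat0, i0, i0.2, by simpa using hneg⟩
        · exact ⟨ghat, hghat0, i0, i0.2, hpos⟩
      set T := s.filter (fun i => 0 < gg i) with hT
      have hTne : T.Nonempty := ⟨i1, Finset.mem_filter.mpr ⟨hi1s, hi1pos⟩⟩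
      obtain ⟨j, hjT, hjmin⟩ := T.exists_min_image (fun i => lam i / gg i) hTne
      have hjs : j ∈ s := (Finset.mem_filter.mp hjT).1
      have hjpos : 0 < gg j := (Finset.mem_filter.mp hjT).2
      set r := lam j / gg j with hr
      have hr0 : 0 ≤ r := div_nonneg (hlam j hjs) hjpos.le
      set lam' : ι → ℝ := fun i => lam i - r * gg i with hlam'
      have hlam'nn : ∀ i ∈ s.erase j, 0 ≤ lam' i := by
        intro i hi
        have his : i ∈ s := Finset.mem_of_mem_erase hi
        by_cases hpos : 0 < gg i
        · have hiT : i ∈ T := Finset.mem_filter.mpr ⟨his, hpos⟩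
          have := hjmin i hiT
          have : r * gg i ≤ lam i := by
            rw [div_le_div_iff₀ hjpos hpos] at this
            calc r * gg i = lam j / gg j * gg i := rfl
            _ ≤ lam i := by
              rw [div_mul_eq_mul_div, div_le_iff₀ hjpos]
              linarith [this]
          simp [hlam']; linarith
        · push_neg at hpos
          have : r * gg i ≤ 0 := mul_nonpos_of_nonneg_of_nonpos hr0 hpos
          have := hlam i his
          simp [hlam']; linarith
      have hlamj : lam' j = 0 := by
        simp only [hlam', hr]
        field_simp
        ring
      have hsum' : ∑ i ∈ s.erase j, lam' i • a i = ∑ i ∈ s, lam i • a i := by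
        rw [Finset.sum_erase _ (by rw [hlamj]; exact zero_smul ℝ _)]
        have : ∑ i ∈ s, lam' i • a i
            = ∑ i ∈ s, lam i • a i - r • ∑ i ∈ s, gg i • a i := by
          rw [Finset.smul_sum, ← Finset.sum_sub_distrib]
          refine Finset.sum_congr rfl (fun i _ => ?_)
          simp [hlam', sub_smul, smul_smul]
        rw [this, hgg0, smul_zero, sub_zero]
      obtain ⟨t, hts, hli', mu, hmu, hmusum⟩ :=
        ih (s.erase j) (Finset.erase_ssubset hjs) lam' hlam'nn
      exact ⟨t, hts.trans (Finset.erase_subset _ _), hli', mu, hmu, by rw [hmusum, hsum']⟩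

lemma isClosed_fg_cone (a : ι → E) :
    IsClosed {z : E | ∃ lam : ι → ℝ, (∀ i, 0 ≤ lam i) ∧ ∑ i, lam i • a i = z} := by
  have carath : ∀ lam : ι → ℝ, (∀ i ∈ (univ : Finset ι), 0 ≤ lam i) →
      ∃ t, t ⊆ univ ∧ LinearIndependent ℝ (fun i : {x // x ∈ t} => a i) ∧
        ∃ mu : ι → ℝ, (∀ i ∈ t, 0 ≤ mu i) ∧ ∑ i ∈ t, mu i • a i = ∑ i ∈ univ, lam i • a i :=
    carath_cone a Finset.univ
  have key : {z : E | ∃ lam : ι → ℝ, (∀ i, 0 ≤ lam i) ∧ ∑ i, lam i • a i = z}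
      = ⋃ t ∈ {t : Finset ι | LinearIndependent ℝ (fun i : {x // x ∈ t} => a i)},
          (fun mu : ({x // x ∈ t} → ℝ) => ∑ i, mu i • a i) '' {mu | ∀ i, 0 ≤ mu i} := by
    ext z
    simp only [Set.mem_setOf_eq, Set.mem_iUnion, Set.mem_image]
    constructor
    · rintro ⟨lam, hlam, rfl⟩
      obtain ⟨t, -, hli, mu, hmu, hsum⟩ := carath lam (fun i _ => hlam i)
      refine ⟨t, hli, fun i => max (mu i) 0, fun i => le_max_right _ _, ?_⟩
      calc ∑ i : {x // x ∈ t}, max (mu (i:ι)) 0 • a (i:ι)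
          = ∑ i : {x // x ∈ t}, mu (i:ι) • a (i:ι) :=
            Finset.sum_congr rfl fun i _ => by rw [max_eq_left (hmu i i.2)]
        _ = ∑ i ∈ t, mu i • a i := Finset.sum_coe_sort t (fun i => mu i • a i)
        _ = ∑ i : ι, lam i • a i := hsum
    · rintro ⟨t, hli, mu, hmu, rfl⟩
      classical
      refine ⟨fun i => if h : i ∈ t then mu ⟨i, h⟩ else 0, fun i => ?_, ?_⟩
      · by_cases h : i ∈ t <;> simp [h, hmu]
      · have h1 : ∑ i : ι, (if h : i ∈ t then mu ⟨i, h⟩ else 0) • a i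
            = ∑ i ∈ t, (if h : i ∈ t then mu ⟨i, h⟩ else 0) • a i :=
          (Finset.sum_subset (Finset.subset_univ t) (fun i _ hit => by simp [hit])).symm
        rw [h1, ← Finset.sum_coe_sort t]
        exact Finset.sum_congr rfl fun i _ => by simp [i.2]
  rw [key]
  refine Set.Finite.isClosed_biUnion (Set.toFinite _) (fun t ht => ?_)
  -- each piece is the image of the nonneg orthant under an injective linear map
  set L : ({x // x ∈ t} → ℝ) →ₗ[ℝ] E :=
    { toFun := fun mu => ∑ i, mu i • a i
      map_add' := fun f g => by simp [add_smul, Finset.sum_add_distrib]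
      map_smul' := fun c f => by simp [Finset.smul_sum, smul_smul] } with hL
  have hker : LinearMap.ker L = ⊥ := by
    rw [LinearMap.ker_eq_bot']
    intro mu hmu
    have := Fintype.linearIndependent_iff.mp ht mu hmu
    funext i; exact this i
  have hclosed : IsClosed {mu : {x // x ∈ t} → ℝ | ∀ i, 0 ≤ mu i} := by
    have : {mu : {x // x ∈ t} → ℝ | ∀ i, 0 ≤ mu i} = ⋂ i, {mu | 0 ≤ mu i} :=
      by ext; simp
    rw [this]
    exact isClosed_iInter fun i => isClosed_le continuous_const (continuous_apply i)
  exact (L.isClosedEmbedding_of_injective hker).isClosedMap _ hclosed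

lemma farkas_lemma (a : ι → E) (b : E)
    (h : ∀ z : E, (∀ i, 0 ≤ ⟪a i, z⟫_ℝ) → 0 ≤ ⟪b, z⟫_ℝ) :
    ∃ lam : ι → ℝ, (∀ i, 0 ≤ lam i) ∧ ∑ i, lam i • a i = b := by
  by_contra hb
  set K : ConvexCone ℝ E :=
    { carrier := {z : E | ∃ lam : ι → ℝ, (∀ i, 0 ≤ lam i) ∧ ∑ i, lam i • a i = z}
      smul_mem' := by
        rintro c hc z ⟨lam, hlam, rfl⟩
        exact ⟨fun i => c * lam i, fun i => mul_nonneg hc.le (hlam i),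
          by rw [Finset.smul_sum]; exact Finset.sum_congr rfl fun i _ => (smul_smul c (lam i) (a i)).symm⟩
      add_mem' := by
        rintro z ⟨lam, hlam, rfl⟩ w ⟨lam', hlam', rfl⟩
        exact ⟨fun i => lam i + lam' i, fun i => add_nonneg (hlam i) (hlam' i),
          by rw [← Finset.sum_add_distrib]; exact Finset.sum_congr rfl fun i _ => add_smul _ _ _⟩ } with hK
  have hne : (K : Set E).Nonempty := ⟨0, fun _ => 0, fun i => le_refl 0, by simp⟩
  have hcl : IsClosed (K : Set E) := isClosed_fg_cone a
  have hbK : b ∉ K := hb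
  obtain ⟨y, hy1, hy2⟩ : ∃ y, (∀ x ∈ K, 0 ≤ ⟪x, y⟫_ℝ) ∧ ⟪y, b⟫_ℝ < 0 := by
    let C : ProperCone ℝ E :=
      { carrier := K
        add_mem' := fun hx hy => K.add_mem hx hy
        zero_mem' := ⟨fun _ => 0, fun i => le_refl 0, by simp⟩
        smul_mem' := by
          rintro c z ⟨lam, hlam, rfl⟩
          exact ⟨fun i => (c:ℝ) * lam i, fun i => mul_nonneg c.2 (hlam i),
            by show ∑ i, ((c:ℝ) * lam i) • a i = (c:ℝ) • ∑ i, lam i • a i; rw [Finset.smul_sum]; exact Finset.sum_congr rfl fun i _ => (smul_smul _ (lam i) (a i)).symm⟩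
        isClosed' := hcl }
    obtain ⟨y, h1, h2⟩ := ProperCone.hyperplane_separation' C hbK
    exact ⟨y, h1, by rwa [real_inner_comm]⟩
  have hai : ∀ i, a i ∈ K := by
    intro i
    refine ⟨Pi.single i 1, fun j => by by_cases h : j = i <;> simp [h, Pi.single_apply], ?_⟩
    rw [Finset.sum_eq_single i (fun j _ hj => by simp [Pi.single_apply, hj]) (by simp)]
    simp
  have := h y (fun i => by simpa [real_inner_comm] using hy1 (a i) (hai i))
  rw [real_inner_comm] at hy2
  linarith

end Farkas

section SecLev
variable {k m : ℕ} {n : Fin k → ℕ} (A : ∀ ℓ, Matrix (Fin m) (Fin (n ℓ)) ℝ)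

lemma dot_mulVec_eq (x : Fin m → ℝ) (ℓ : Fin k) (y : Fin (n ℓ) → ℝ) :
    x ⬝ᵥ A ℓ *ᵥ y = ∑ j, (∑ i, x i * A ℓ i j) * y j := by
  simp only [dotProduct, Matrix.mulVec, Finset.mul_sum, Finset.sum_mul]
  rw [Finset.sum_comm]
  exact Finset.sum_congr rfl fun j _ => Finset.sum_congr rfl fun i _ => by ring

/-- the vertex `e_j` of the simplex -/
lemma vertex_mem_stdSimplex {N : ℕ} (j : Fin N) :
    (fun j' => if j' = j then (1:ℝ) else 0) ∈ stdSimplex ℝ (Fin N) := by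
  constructor
  · intro j'; by_cases h : j' = j <;> simp [h]
  · simp

lemma secLev_le (x : Fin m → ℝ) (ℓ : Fin k) (hn : 0 < n ℓ) {t : ℝ}
    (h : ∀ j, ∑ i, x i * A ℓ i j ≤ t) : secLev A x ℓ ≤ t := by
  have : Nonempty (stdSimplex ℝ (Fin (n ℓ))) :=
    ⟨⟨_, vertex_mem_stdSimplex ⟨0, hn⟩⟩⟩
  refine ciSup_le fun y => ?_
  rw [dot_mulVec_eq]
  calc ∑ j, (∑ i, x i * A ℓ i j) * y.1 j ≤ ∑ j, t * y.1 j :=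
        Finset.sum_le_sum fun j _ => mul_le_mul_of_nonneg_right (h j) (y.2.1 j)
    _ = t := by rw [← Finset.mul_sum, y.2.2, mul_one]

lemma le_secLev (x : Fin m → ℝ) (ℓ : Fin k) (j : Fin (n ℓ)) :
    ∑ i, x i * A ℓ i j ≤ secLev A x ℓ := by
  have hbdd : BddAbove (Set.range fun y : stdSimplex ℝ (Fin (n ℓ)) => x ⬝ᵥ A ℓ *ᵥ y.1) := by
    have hne : (univ : Finset (Fin (n ℓ))).Nonempty := ⟨j, mem_univ j⟩
    refine ⟨univ.sup' hne (fun j' => ∑ i, x i * A ℓ i j'), ?_⟩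
    rintro w ⟨y, rfl⟩
    show x ⬝ᵥ A ℓ *ᵥ y.1 ≤ _
    rw [dot_mulVec_eq]
    calc ∑ j', (∑ i, x i * A ℓ i j') * y.1 j'
        ≤ ∑ j', (univ.sup' hne fun j'' => ∑ i, x i * A ℓ i j'') * y.1 j' :=
          Finset.sum_le_sum fun j' _ =>
            mul_le_mul_of_nonneg_right (Finset.le_sup' (fun j'' => ∑ i, x i * A ℓ i j'') (mem_univ j')) (y.2.1 j')
      _ = _ := by rw [← Finset.mul_sum, y.2.2, mul_one]
  have hmem := le_ciSup hbdd (⟨_, vertex_mem_stdSimplex j⟩ : stdSimplex ℝ (Fin (n ℓ)))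
  refine le_trans (le_of_eq ?_) hmem
  rw [dot_mulVec_eq]
  rw [Finset.sum_eq_single j (fun j' _ hj' => by simp [hj']) (by simp)]
  simp

end SecLev

section Gens
variable (k m : ℕ) (n : Fin k → ℕ) (A : ∀ ℓ, Matrix (Fin m) (Fin (n ℓ)) ℝ) (v : Fin k → ℝ)

abbrev GJ (k m : ℕ) := Fin m ⊕ (Fin k ⊕ Unit)
abbrev GE (k m : ℕ) := EuclideanSpace ℝ (GJ k m)
abbrev GI (k m : ℕ) (n : Fin k → ℕ) := Fin m ⊕ ((Σ ℓ : Fin k, Fin (n ℓ)) ⊕ (Fin k ⊕ Fin 3))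

noncomputable def ghoseGen : GI k m n → GE k m
  | .inl i => WithLp.toLp 2 (Sum.elim (fun i' => if i' = i then 1 else 0) 0)
  | .inr (.inl p) =>
      WithLp.toLp 2 (Sum.elim (fun i => -(A p.1 i p.2)) (Sum.elim (fun ℓ' => if ℓ' = p.1 then 1 else 0) 0))
  | .inr (.inr (.inl ℓ)) =>
      WithLp.toLp 2 (Sum.elim 0 (Sum.elim (fun ℓ' => if ℓ' = ℓ then -1 else 0) (fun _ => v ℓ)))
  | .inr (.inr (.inr c)) =>
      WithLp.toLp 2 (![Sum.elim (fun _ => (-1:ℝ)) (Sum.elim 0 (fun _ => 1)),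
        Sum.elim (fun _ => (1:ℝ)) (Sum.elim 0 (fun _ => -1)),
        Sum.elim 0 (Sum.elim 0 (fun _ => 1))] c)

noncomputable def ghoseB : GE k m :=
  WithLp.toLp 2 (Sum.elim 0 (Sum.elim (fun _ => (1:ℝ)) (fun _ => -(∑ ℓ, v ℓ))))

lemma GE.inner_eq (g z : GE k m) :
    ⟪g, z⟫_ℝ = ∑ i, g (.inl i) * z (.inl i)
      + (∑ ℓ, g (.inr (.inl ℓ)) * z (.inr (.inl ℓ)) + g (.inr (.inr ())) * z (.inr (.inr ()))) := by
  rw [PiLp.inner_apply]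
  simp [Fintype.sum_sum_type, RCLike.inner_apply, starRingEnd_apply, mul_comm]

variable {k m n v}

lemma inner_gen_mu (i : Fin m) (z : GE k m) :
    ⟪ghoseGen k m n A v (.inl i), z⟫_ℝ = z (.inl i) := by
  rw [GE.inner_eq, ghoseGen]
  simp [ite_mul, Finset.sum_ite_eq']

lemma inner_gen_lam (p : Σ ℓ : Fin k, Fin (n ℓ)) (z : GE k m) :
    ⟪ghoseGen k m n A v (.inr (.inl p)), z⟫_ℝ
      = z (.inr (.inl p.1)) - ∑ i, A p.1 i p.2 * z (.inl i) := by
  rw [GE.inner_eq, ghoseGen]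
  simp [ite_mul, Finset.sum_ite_eq', sub_eq_neg_add]

lemma inner_gen_nu (ℓ : Fin k) (z : GE k m) :
    ⟪ghoseGen k m n A v (.inr (.inr (.inl ℓ))), z⟫_ℝ
      = v ℓ * z (.inr (.inr ())) - z (.inr (.inl ℓ)) := by
  rw [GE.inner_eq, ghoseGen]
  simp [ite_mul, Finset.sum_ite_eq']
  ring

lemma inner_gen_c0 (z : GE k m) :
    ⟪ghoseGen k m n A v (.inr (.inr (.inr 0))), z⟫_ℝ
      = z (.inr (.inr ())) - ∑ i, z (.inl i) := by
  rw [GE.inner_eq, ghoseGen]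
  simp [Finset.sum_neg_distrib]
  ring

lemma inner_gen_c1 (z : GE k m) :
    ⟪ghoseGen k m n A v (.inr (.inr (.inr 1))), z⟫_ℝ
      = ∑ i, z (.inl i) - z (.inr (.inr ())) := by
  rw [GE.inner_eq, ghoseGen]
  simp
  ring

lemma inner_gen_c2 (z : GE k m) :
    ⟪ghoseGen k m n A v (.inr (.inr (.inr 2))), z⟫_ℝ = z (.inr (.inr ())) := by
  rw [show ghoseGen k m n A v (.inr (.inr (.inr 2)))
      = (WithLp.toLp 2 (Sum.elim (0 : Fin m → ℝ) (Sum.elim (0 : Fin k → ℝ) (fun _ => 1))) : GE k m) from rfl,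
    GE.inner_eq]
  simp

lemma inner_ghoseB (z : GE k m) :
    ⟪ghoseB k m v, z⟫_ℝ = ∑ ℓ, z (.inr (.inl ℓ)) - (∑ ℓ, v ℓ) * z (.inr (.inr ())) := by
  rw [GE.inner_eq, ghoseB]
  simp [sub_eq_add_neg, neg_mul]

end Gens

/-- Ghose's characterization of Pareto-optimal security strategies. -/
theorem ghose_characterization (k m : ℕ) (hm : 0 < m) (hk : 0 < k)
    (n : Fin k → ℕ) (hn : ∀ ℓ, 0 < n ℓ)
    (A : ∀ ℓ, Matrix (Fin m) (Fin (n ℓ)) ℝ)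
    (xstar : Fin m → ℝ) (hx : xstar ∈ stdSimplex ℝ (Fin m)) :
    IsPOSS A xstar ↔
      ∃ α : Fin k → ℝ, (∀ ℓ, 0 < α ℓ) ∧ (∑ ℓ, α ℓ = 1) ∧
        ∀ x ∈ stdSimplex ℝ (Fin m),
          ∑ ℓ, α ℓ * secLev A xstar ℓ ≤ ∑ ℓ, α ℓ * secLev A x ℓ := by
  constructor
  · -- hard direction
    intro h
    set v : Fin k → ℝ := secLev A xstar with hv
    -- Step 1: the Farkas hypothesis holds, by Pareto optimality
    have hclaim : ∀ z : GE k m,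
        (∀ i, 0 ≤ ⟪ghoseGen k m n A v i, z⟫_ℝ) → 0 ≤ ⟪ghoseB k m v, z⟫_ℝ := by
      intro z hz
      have hmu : ∀ i, 0 ≤ z (.inl i) := fun i => by
        have := hz (.inl i); rwa [inner_gen_mu] at this
      have hlamz : ∀ p : Σ ℓ : Fin k, Fin (n ℓ),
          ∑ i, A p.1 i p.2 * z (.inl i) ≤ z (.inr (.inl p.1)) := fun p => by
        have := hz (.inr (.inl p)); rw [inner_gen_lam] at this; linarith
      have hnuz : ∀ ℓ, z (.inr (.inl ℓ)) ≤ v ℓ * z (.inr (.inr ())) := fun ℓ => by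
        have := hz (.inr (.inr (.inl ℓ))); rw [inner_gen_nu] at this; linarith
      have hc0 := hz (.inr (.inr (.inr 0))); rw [inner_gen_c0] at hc0
      have hc1 := hz (.inr (.inr (.inr 1))); rw [inner_gen_c1] at hc1
      have hc2 := hz (.inr (.inr (.inr 2))); rw [inner_gen_c2] at hc2
      have heq : z (.inr (.inr ())) = ∑ i, z (.inl i) :=
        le_antisymm (by linarith) (by linarith)
      rw [inner_ghoseB]
      rcases eq_or_lt_of_le hc2 with hzs0 | hzspos
      · -- the homogenizing variable vanishes
        have hx0 : ∀ i, z (.inl i) = 0 := by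
          have hsum0 : ∑ i, z (.inl i) = 0 := by rw [← heq, ← hzs0]
          intro i
          exact (Finset.sum_eq_zero_iff_of_nonneg (fun i _ => hmu i)).mp hsum0 i (mem_univ i)
        have ht0 : ∀ ℓ, z (.inr (.inl ℓ)) = 0 := by
          intro ℓ
          have h1 := hlamz ⟨ℓ, ⟨0, hn ℓ⟩⟩
          rw [Finset.sum_eq_zero (fun i _ => by rw [hx0 i, mul_zero])] at h1
          have h2 := hnuz ℓ
          rw [← hzs0, mul_zero] at h2
          linarith
        rw [Finset.sum_eq_zero (fun ℓ _ => ht0 ℓ), ← hzs0, mul_zero, sub_zero]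
      · -- rescale to a simplex point and use Pareto optimality
        set s : ℝ := z (.inr (.inr ())) with hs
        set x' : Fin m → ℝ := fun i => z (.inl i) / s with hx'
        have hx'X : x' ∈ stdSimplex ℝ (Fin m) := by
          refine ⟨fun i => div_nonneg (hmu i) hzspos.le, ?_⟩
          show ∑ i, z (.inl i) / s = 1
          rw [← Finset.sum_div, ← heq, div_self hzspos.ne']
        have hsec_le : ∀ ℓ, secLev A x' ℓ ≤ z (.inr (.inl ℓ)) / s := by
          intro ℓ
          refine secLev_le A x' ℓ (hn ℓ) (fun j => ?_)
          calc ∑ i, x' i * A ℓ i j = (∑ i, A ℓ i j * z (.inl i)) / s := by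
                rw [Finset.sum_div]
                exact Finset.sum_congr rfl fun i _ => by rw [hx']; ring
            _ ≤ z (.inr (.inl ℓ)) / s := by
                apply div_le_div_of_nonneg_right (hlamz ⟨ℓ, j⟩) hzspos.le
        have hle_v : secLev A x' ≤ v := fun ℓ =>
          (hsec_le ℓ).trans ((div_le_iff₀ hzspos).mpr (hnuz ℓ))
        have heqv : secLev A x' = v := by
          by_contra hne
          exact h.2 ⟨x', hx'X, hle_v, hne⟩
        have hge : ∀ ℓ, v ℓ * s ≤ z (.inr (.inl ℓ)) := by
          intro ℓ
          have h1 := hsec_le ℓ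
          rw [heqv] at h1
          exact (le_div_iff₀ hzspos).mp h1
        have hsum : (∑ ℓ, v ℓ) * s ≤ ∑ ℓ, z (.inr (.inl ℓ)) := by
          rw [Finset.sum_mul]
          exact Finset.sum_le_sum fun ℓ _ => hge ℓ
        linarith
    -- Step 2: apply Farkas' lemma and read off the weights
    obtain ⟨lam, hlam0, hlamsum⟩ := farkas_lemma (ghoseGen k m n A v) (ghoseB k m v) hclaim
    have hfun : ∀ z : GE k m,
        ∑ i, lam i * ⟪ghoseGen k m n A v i, z⟫_ℝ = ⟪ghoseB k m v, z⟫_ℝ := by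
      intro z
      have h0 : ⟪∑ i, lam i • ghoseGen k m n A v i, z⟫_ℝ = ⟪ghoseB k m v, z⟫_ℝ := by
        rw [hlamsum]
      rw [sum_inner] at h0
      simp only [real_inner_smul_left] at h0
      exact h0
    have hexp : ∀ z : GE k m,
        (∑ i : Fin m, lam (.inl i) * ⟪ghoseGen k m n A v (.inl i), z⟫_ℝ)
        + ((∑ p : Σ ℓ : Fin k, Fin (n ℓ),
              lam (.inr (.inl p)) * ⟪ghoseGen k m n A v (.inr (.inl p)), z⟫_ℝ)
        + ((∑ ℓ, lam (.inr (.inr (.inl ℓ))) * ⟪ghoseGen k m n A v (.inr (.inr (.inl ℓ))), z⟫_ℝ)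
        + (lam (.inr (.inr (.inr 0))) * ⟪ghoseGen k m n A v (.inr (.inr (.inr 0))), z⟫_ℝ
          + lam (.inr (.inr (.inr 1))) * ⟪ghoseGen k m n A v (.inr (.inr (.inr 1))), z⟫_ℝ
          + lam (.inr (.inr (.inr 2))) * ⟪ghoseGen k m n A v (.inr (.inr (.inr 2))), z⟫_ℝ)))
        = ⟪ghoseB k m v, z⟫_ℝ := by
      intro z
      rw [← hfun z, Fintype.sum_sum_type, Fintype.sum_sum_type, Fintype.sum_sum_type,
        Fin.sum_univ_three]
    -- evaluation at z2 = (0, 0, -1)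
    have hE2 := hexp (WithLp.toLp 2 (Sum.elim (0 : Fin m → ℝ)
      (Sum.elim (0 : Fin k → ℝ) (fun _ => (-1:ℝ)))) : GE k m)
    simp only [inner_gen_mu, inner_gen_lam, inner_gen_nu, inner_gen_c0, inner_gen_c1,
      inner_gen_c2, inner_ghoseB, PiLp.toLp_apply, Sum.elim_inl, Sum.elim_inr, Pi.zero_apply, mul_zero,
      zero_mul, sub_zero, zero_sub, mul_neg, mul_one, neg_neg, zero_add, add_zero,
      Finset.sum_const_zero, neg_zero] at hE2
    rw [Finset.sum_neg_distrib] at hE2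
    set W : Fin k → ℝ := fun ℓ => 1 + lam (.inr (.inr (.inl ℓ))) with hW
    have hWpos : ∀ ℓ, 0 < W ℓ := fun ℓ => by
      have := hlam0 (.inr (.inr (.inl ℓ))); rw [hW]; dsimp only; linarith
    have hS : 0 < ∑ ℓ, W ℓ := Finset.sum_pos (fun ℓ _ => hWpos ℓ) ⟨⟨0, hk⟩, mem_univ _⟩
    have hWsum : ∀ w : Fin k → ℝ,
        ∑ ℓ, W ℓ * w ℓ = ∑ ℓ, w ℓ + ∑ ℓ, lam (.inr (.inr (.inl ℓ))) * w ℓ := by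
      intro w
      rw [← Finset.sum_add_distrib]
      exact Finset.sum_congr rfl fun ℓ _ => by rw [hW]; ring
    have hkey : ∀ x ∈ stdSimplex ℝ (Fin m),
        ∑ ℓ, W ℓ * v ℓ ≤ ∑ ℓ, W ℓ * secLev A x ℓ := by
      intro xh hxh
      have hE1 := hexp (WithLp.toLp 2 (Sum.elim xh (Sum.elim (secLev A xh) (fun _ => (0:ℝ)))) : GE k m)
      simp only [inner_gen_mu, inner_gen_lam, inner_gen_nu, inner_gen_c0, inner_gen_c1,
        inner_gen_c2, inner_ghoseB, PiLp.toLp_apply, Sum.elim_inl, Sum.elim_inr, mul_zero, zero_mul, sub_zero,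
        zero_sub, mul_neg, mul_one, zero_add, add_zero, neg_zero] at hE1
      rw [Finset.sum_neg_distrib, hxh.2, mul_one, mul_one] at hE1
      have h1 : 0 ≤ ∑ i, lam (.inl i) * xh i :=
        Finset.sum_nonneg fun i _ => mul_nonneg (hlam0 _) (hxh.1 i)
      have h2 : 0 ≤ ∑ p : Σ ℓ : Fin k, Fin (n ℓ),
          lam (.inr (.inl p)) * (secLev A xh p.1 - ∑ i, A p.1 i p.2 * xh i) := by
        refine Finset.sum_nonneg fun p _ => mul_nonneg (hlam0 _) (sub_nonneg.mpr ?_)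
        calc ∑ i, A p.1 i p.2 * xh i = ∑ i, xh i * A p.1 i p.2 :=
              Finset.sum_congr rfl fun i _ => mul_comm _ _
          _ ≤ secLev A xh p.1 := le_secLev A xh p.1 p.2
      rw [hWsum v, hWsum (secLev A xh)]
      have h3 := hlam0 (.inr (.inr (.inr 2)))
      linarith
    refine ⟨fun ℓ => W ℓ / (∑ ℓ', W ℓ'), fun ℓ => div_pos (hWpos ℓ) hS, ?_, ?_⟩
    · rw [← Finset.sum_div, div_self hS.ne']
    · intro xx hxx
      calc ∑ ℓ, W ℓ / (∑ ℓ', W ℓ') * secLev A xstar ℓ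
          = (∑ ℓ, W ℓ * v ℓ) / (∑ ℓ', W ℓ') := by
            rw [Finset.sum_div]
            exact Finset.sum_congr rfl fun ℓ _ => by rw [hv]; ring
        _ ≤ (∑ ℓ, W ℓ * secLev A xx ℓ) / (∑ ℓ', W ℓ') :=
            div_le_div_of_nonneg_right (hkey xx hxx) hS.le
        _ = ∑ ℓ, W ℓ / (∑ ℓ', W ℓ') * secLev A xx ℓ := by
            rw [Finset.sum_div]
            exact Finset.sum_congr rfl fun ℓ _ => by ring
  · -- easy direction
    rintro ⟨α, hαpos, hαsum, hmin⟩
    refine ⟨hx, ?_⟩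
    rintro ⟨x, hxX, hle, hne⟩
    have hlt : ∑ ℓ, α ℓ * secLev A x ℓ < ∑ ℓ, α ℓ * secLev A xstar ℓ := by
      obtain ⟨ℓ0, hℓ0⟩ := Function.ne_iff.mp hne
      refine Finset.sum_lt_sum
        (fun ℓ _ => mul_le_mul_of_nonneg_left (hle ℓ) (hαpos ℓ).le)
        ⟨ℓ0, mem_univ ℓ0, ?_⟩
      exact mul_lt_mul_of_pos_left (lt_of_le_of_ne (hle ℓ0) hℓ0) (hαpos ℓ0)
    exact absurd (hmin x hxX) (not_le.mpr hlt)
end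

section
/- (Minimax fails consistency) For the 2-criteria game A(1) = (1,0), A(2) = (0,1) (1×2 matrices), the amalgamated scalar game M[αA(1), (1−α)A(2)] = (α, 1, 0, 1−α) has value 1 for every α ∈ (0,1), so no extended minimax payoff (β, 1−β), β ∈ [0,1], satisfies αβ + (1−α)(1−β) = 1 unless β ∈ {0,1} and α matches accordingly; in particular the extended minimax correspondence does not satisfy the consistency property A.6. -/
open Matrix BigOperators

/-- Maximal elements of a set of payoff vectors (componentwise order). -/
def vMax {k : ℕ} (S : Set (Fin k → ℝ)) : Set (Fin k → ℝ) :=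
  {z ∈ S | ∀ w ∈ S, z ≤ w → w = z}

/-- Minimal elements of a set of payoff vectors (componentwise order). -/
def vMin {k : ℕ} (S : Set (Fin k → ℝ)) : Set (Fin k → ℝ) :=
  {z ∈ S | ∀ w ∈ S, w ≤ z → w = z}

/-- Vector payoff of the pair of strategies `(x, y)`. -/
def payVec {k m n : ℕ} (A : Fin k → Matrix (Fin m) (Fin n) ℝ)
    (x : Fin m → ℝ) (y : Fin n → ℝ) : Fin k → ℝ :=
  fun ℓ => x ⬝ᵥ A ℓ *ᵥ y

/-- The set of extended minimax payoff vectors. -/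
def Vminmax {k m n : ℕ} (A : Fin k → Matrix (Fin m) (Fin n) ℝ) : Set (Fin k → ℝ) :=
  vMin (⋃ x ∈ stdSimplex ℝ (Fin m),
    vMax {z | ∃ y ∈ stdSimplex ℝ (Fin n), z = payVec A x y})

/-- Value of a scalar zero-sum matrix game. -/
noncomputable def gameVal {m n : ℕ} (B : Matrix (Fin m) (Fin n) ℝ) : ℝ :=
  ⨅ x : stdSimplex ℝ (Fin m), ⨆ y : stdSimplex ℝ (Fin n), x.1 ⬝ᵥ B *ᵥ y.1

-- auxiliary lemmas

lemma simplex1_eq (x : Fin 1 → ℝ) (hx : x ∈ stdSimplex ℝ (Fin 1)) : x = fun _ => 1 := by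
  funext i
  have := hx.2
  simp [Fin.sum_univ_one] at this
  fin_cases i; exact this

lemma one_mem_simplex1 : (fun _ => (1:ℝ)) ∈ stdSimplex ℝ (Fin 1) :=
  ⟨fun _ => zero_le_one, by simp⟩

lemma simplex_antichain {n : ℕ} {z w : Fin n → ℝ} (hz : z ∈ stdSimplex ℝ (Fin n))
    (hw : w ∈ stdSimplex ℝ (Fin n)) (h : z ≤ w) : w = z := by
  funext i
  have hsum : ∑ j, z j = ∑ j, w j := hz.2.trans hw.2.symm
  have := (Finset.sum_eq_sum_iff_of_le (fun j _ => h j)).mp hsum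
  exact (this i (Finset.mem_univ i)).symm

lemma payVec_eq (x : Fin 1 → ℝ) (hx : x ∈ stdSimplex ℝ (Fin 1)) (y : Fin 2 → ℝ) :
    payVec (![(!![1, 0] : Matrix (Fin 1) (Fin 2) ℝ), !![0, 1]]) x y = y := by
  have hx1 := simplex1_eq x hx
  subst hx1
  funext ℓ
  fin_cases ℓ <;>
    simp [payVec, dotProduct, mulVec, Fin.sum_univ_one, Fin.sum_univ_two]

lemma Vminmax_eq :
    Vminmax (![(!![1, 0] : Matrix (Fin 1) (Fin 2) ℝ), !![0, 1]]) = stdSimplex ℝ (Fin 2) := by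
  have hT : ∀ x ∈ stdSimplex ℝ (Fin 1),
      {z | ∃ y ∈ stdSimplex ℝ (Fin 2),
        z = payVec (![(!![1, 0] : Matrix (Fin 1) (Fin 2) ℝ), !![0, 1]]) x y}
      = stdSimplex ℝ (Fin 2) := by
    intro x hx
    ext z
    constructor
    · rintro ⟨y, hy, rfl⟩; rwa [payVec_eq x hx]
    · intro hz; exact ⟨z, hz, (payVec_eq x hx z).symm⟩
  have hU : (⋃ x ∈ stdSimplex ℝ (Fin 1),
      vMax {z | ∃ y ∈ stdSimplex ℝ (Fin 2),
        z = payVec (![(!![1, 0] : Matrix (Fin 1) (Fin 2) ℝ), !![0, 1]]) x y})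
      = stdSimplex ℝ (Fin 2) := by
    ext z
    simp only [Set.mem_iUnion]
    constructor
    · rintro ⟨x, hx, hz⟩
      rw [hT x hx] at hz
      exact hz.1
    · intro hz
      refine ⟨fun _ => 1, one_mem_simplex1, ?_⟩
      rw [hT _ one_mem_simplex1]
      exact ⟨hz, fun w hw hle => simplex_antichain hz hw hle⟩
  rw [Vminmax, hU]
  ext z
  exact ⟨fun h => h.1, fun hz => ⟨hz, fun w hw hle => (simplex_antichain hw hz hle).symm⟩⟩

lemma gameVal_eq (α : ℝ) (hα : α ∈ Set.Ioo (0:ℝ) 1) :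
    gameVal (!![α, 1, 0, 1 - α] : Matrix (Fin 1) (Fin 4) ℝ) = 1 := by
  obtain ⟨hα0, hα1⟩ := hα
  have key : ∀ x : stdSimplex ℝ (Fin 1),
      (⨆ y : stdSimplex ℝ (Fin 4), x.1 ⬝ᵥ (!![α, 1, 0, 1 - α] : Matrix (Fin 1) (Fin 4) ℝ) *ᵥ y.1) = 1 := by
    intro x
    have hx := simplex1_eq x.1 x.2
    have hval : ∀ y : stdSimplex ℝ (Fin 4),
        x.1 ⬝ᵥ (!![α, 1, 0, 1 - α] : Matrix (Fin 1) (Fin 4) ℝ) *ᵥ y.1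
        = α * y.1 0 + y.1 1 + (1 - α) * y.1 3 := by
      intro y
      rw [hx]
      simp [dotProduct, mulVec, Fin.sum_univ_one, Fin.sum_univ_four]
    have hub : ∀ y : stdSimplex ℝ (Fin 4),
        x.1 ⬝ᵥ (!![α, 1, 0, 1 - α] : Matrix (Fin 1) (Fin 4) ℝ) *ᵥ y.1 ≤ 1 := by
      intro y
      rw [hval y]
      obtain ⟨hpos, hsum⟩ := y.2
      have h0 := hpos 0; have h1 := hpos 1; have h2 := hpos 2; have h3 := hpos 3
      have hs : y.1 0 + y.1 1 + y.1 2 + y.1 3 = 1 := by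
        rw [← hsum, Fin.sum_univ_four]
      nlinarith [mul_nonneg hα0.le h0, mul_nonneg (by linarith : (0:ℝ) ≤ 1 - α) h0,
        mul_nonneg hα0.le h3, mul_nonneg (by linarith : (0:ℝ) ≤ 1 - α) h3]
    have e1mem : (![0,1,0,0] : Fin 4 → ℝ) ∈ stdSimplex ℝ (Fin 4) := by
      constructor
      · intro i; fin_cases i <;> norm_num
      · simp [Fin.sum_univ_four]
    have : Nonempty (stdSimplex ℝ (Fin 4)) := ⟨⟨_, e1mem⟩⟩
    apply le_antisymm
    · exact ciSup_le hub
    · have := le_ciSup (f := fun y : stdSimplex ℝ (Fin 4) =>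
        x.1 ⬝ᵥ (!![α, 1, 0, 1 - α] : Matrix (Fin 1) (Fin 4) ℝ) *ᵥ y.1)
        ⟨1, by rintro r ⟨y, rfl⟩; exact hub y⟩ ⟨_, e1mem⟩
      rw [hval ⟨_, e1mem⟩] at this
      refine le_trans (le_of_eq ?_) this
      simp
  have : Nonempty (stdSimplex ℝ (Fin 1)) := ⟨⟨_, one_mem_simplex1⟩⟩
  rw [gameVal]
  rw [show (fun x : stdSimplex ℝ (Fin 1) => ⨆ y : stdSimplex ℝ (Fin 4),
      x.1 ⬝ᵥ (!![α, 1, 0, 1 - α] : Matrix (Fin 1) (Fin 4) ℝ) *ᵥ y.1) = fun _ => 1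
    from funext key]
  exact ciInf_const

/-- failure of consistency (A.6) for extended minimax payoffs.
For the 2-criteria game `A(1) = (1,0)`, `A(2) = (0,1)`, the amalgamated scalar
game `M[αA(1), (1-α)A(2)] = (α, 1, 0, 1-α)` has value `1` for every `α ∈ (0,1)`;
an extended minimax payoff `(β, 1-β)` can satisfy `αβ + (1-α)(1-β) = 1` only if
`β ∈ {0, 1}`; and in particular some extended minimax payoff witnesses the
failure of consistency for all `α ∈ (0,1)`. -/
theorem minimax_fails_consistency :
    (∀ α ∈ Set.Ioo (0 : ℝ) 1,
      gameVal (!![α, 1, 0, 1 - α] : Matrix (Fin 1) (Fin 4) ℝ) = 1) ∧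
    (∀ z ∈ Vminmax (![(!![1, 0] : Matrix (Fin 1) (Fin 2) ℝ), !![0, 1]]),
      ∀ α ∈ Set.Ioo (0 : ℝ) 1,
        α * z 0 + (1 - α) * z 1 = gameVal (!![α, 1, 0, 1 - α] : Matrix (Fin 1) (Fin 4) ℝ) →
          z 0 = 0 ∨ z 0 = 1) ∧
    ∃ z ∈ Vminmax (![(!![1, 0] : Matrix (Fin 1) (Fin 2) ℝ), !![0, 1]]),
      ∀ α ∈ Set.Ioo (0 : ℝ) 1,
        α * z 0 + (1 - α) * z 1 ≠ gameVal (!![α, 1, 0, 1 - α] : Matrix (Fin 1) (Fin 4) ℝ) := by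
  refine ⟨fun α hα => gameVal_eq α hα, ?_, ?_⟩
  · intro z hz α hα h
    rw [Vminmax_eq] at hz
    rw [gameVal_eq α hα] at h
    obtain ⟨hpos, hsum⟩ := hz
    have h0 := hpos 0; have h1 := hpos 1
    have hs : z 0 + z 1 = 1 := by rw [← hsum, Fin.sum_univ_two]
    obtain ⟨hα0, hα1⟩ := hα
    exfalso
    have p1 : 0 ≤ α * z 1 := mul_nonneg hα0.le h1
    have p2 : 0 ≤ (1 - α) * z 0 := mul_nonneg (by linarith) h0
    have key : α * z 1 + (1 - α) * z 0 = 0 := by linarith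
    have hz1 : z 1 = 0 := by
      rcases mul_eq_zero.mp (by linarith : α * z 1 = 0) with h' | h'
      · linarith
      · exact h'
    have hz0 : z 0 = 0 := by
      rcases mul_eq_zero.mp (by linarith : (1 - α) * z 0 = 0) with h' | h'
      · linarith
      · exact h'
    linarith
  · refine ⟨fun _ => 1/2, ?_, ?_⟩
    · rw [Vminmax_eq]
      exact ⟨fun _ => by norm_num, by simp [Fin.sum_univ_two]⟩
    · intro α hα h
      rw [gameVal_eq α hα] at h
      norm_num at h
      linarith [h]
end

section
/- With Ā(ℓ)_{i,(j_1,…,j_k)} = A(ℓ)_{i,j_ℓ}, for every x ∈ X_m and every ℓ: max over ȳ in the product simplex of xᵀĀ(ℓ)ȳ equals max over y(ℓ) ∈ Y_{n_ℓ} of xᵀA(ℓ)y(ℓ), i.e., the security level of x in each criterion is the same in the original game and in its product-index transformation. Consequently x* is a Pareto-optimal security strategy for player I in A if and only if x* is a Pareto-optimal security strategy for player I in Ā. -/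
open Matrix BigOperators

/-- The product-index transformation: `Ā(ℓ)_{i,(j₁,…,j_k)} = A(ℓ)_{i,j_ℓ}`. -/
def prodGame {k m : ℕ} {n : Fin k → ℕ}
    (A : ∀ ℓ, Matrix (Fin m) (Fin (n ℓ)) ℝ) (ℓ : Fin k) :
    Matrix (Fin m) (∀ ℓ', Fin (n ℓ')) ℝ :=
  fun i J => A ℓ i (J ℓ)

/-- Security level of `x` in criterion `ℓ` of the original game. -/
noncomputable def secA {k m : ℕ} {n : Fin k → ℕ}
    (A : ∀ ℓ, Matrix (Fin m) (Fin (n ℓ)) ℝ) (x : Fin m → ℝ) : Fin k → ℝ :=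
  fun ℓ => ⨆ y : stdSimplex ℝ (Fin (n ℓ)), x ⬝ᵥ A ℓ *ᵥ y.1

/-- Security level of `x` in criterion `ℓ` of the product-index game. -/
noncomputable def secBar {k m : ℕ} {n : Fin k → ℕ}
    (A : ∀ ℓ, Matrix (Fin m) (Fin (n ℓ)) ℝ) (x : Fin m → ℝ) : Fin k → ℝ :=
  fun ℓ => ⨆ ybar : stdSimplex ℝ (∀ ℓ', Fin (n ℓ')), x ⬝ᵥ prodGame A ℓ *ᵥ ybar.1

/-- Pareto-optimal security strategy with respect to a security level map `s`. -/
def IsPOSSwrt {k m : ℕ} (s : (Fin m → ℝ) → Fin k → ℝ) (xstar : Fin m → ℝ) : Prop :=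
  xstar ∈ stdSimplex ℝ (Fin m) ∧
    ¬ ∃ x ∈ stdSimplex ℝ (Fin m), s x ≤ s xstar ∧ s x ≠ s xstar

/-- the security levels in the original game and in its
product-index transformation coincide, hence the Pareto-optimal security
strategies of the two games coincide. -/
theorem secLevels_prodGame_eq (k m : ℕ) (hm : 0 < m) (n : Fin k → ℕ) (hn : ∀ ℓ, 0 < n ℓ)
    (A : ∀ ℓ, Matrix (Fin m) (Fin (n ℓ)) ℝ) :
    (∀ x ∈ stdSimplex ℝ (Fin m), ∀ ℓ, secBar A x ℓ = secA A x ℓ) ∧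
    ∀ xstar : Fin m → ℝ, (IsPOSSwrt (secA A) xstar ↔ IsPOSSwrt (secBar A) xstar) := by
  classical
  have key : ∀ (x : Fin m → ℝ) (ℓ : Fin k), secBar A x ℓ = secA A x ℓ := by
    intro x ℓ
    -- embedding of Fin (n ℓ) into the product index set
    set e : Fin (n ℓ) → (∀ ℓ', Fin (n ℓ')) :=
      fun j ℓ' => if h : ℓ' = ℓ then h.symm ▸ j else ⟨0, hn ℓ'⟩ with he_def
    have he : ∀ j, e j ℓ = j := by intro j; simp [he_def]
    have hrange :
        Set.range (fun ybar : stdSimplex ℝ (∀ ℓ', Fin (n ℓ')) =>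
            x ⬝ᵥ prodGame A ℓ *ᵥ ybar.1)
          = Set.range (fun y : stdSimplex ℝ (Fin (n ℓ)) => x ⬝ᵥ A ℓ *ᵥ y.1) := by
      apply Set.Subset.antisymm
      · rintro _ ⟨⟨yb, hyb0, hyb1⟩, rfl⟩
        refine ⟨⟨fun j => ∑ J : ∀ ℓ', Fin (n ℓ'), if J ℓ = j then yb J else 0,
            ?_, ?_⟩, ?_⟩
        · intro j
          exact Finset.sum_nonneg fun J _ => by
            by_cases h : J ℓ = j <;> simp [h, hyb0 J]
        · rw [Finset.sum_comm]
          simpa using hyb1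
        · simp only [dotProduct, mulVec, prodGame]
          refine Finset.sum_congr rfl fun i _ => ?_
          congr 1
          simp only [Finset.mul_sum, mul_ite, mul_zero]
          rw [Finset.sum_comm]
          refine Finset.sum_congr rfl fun J _ => ?_
          simp
      · rintro _ ⟨⟨y, hy0, hy1⟩, rfl⟩
        refine ⟨⟨fun J => ∑ j : Fin (n ℓ), if e j = J then y j else 0, ?_, ?_⟩, ?_⟩
        · intro J
          exact Finset.sum_nonneg fun j _ => by
            by_cases h : e j = J <;> simp [h, hy0 j]
        · rw [Finset.sum_comm]
          simpa using hy1
        · simp only [dotProduct, mulVec, prodGame]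
          refine Finset.sum_congr rfl fun i _ => ?_
          congr 1
          simp only [Finset.mul_sum, mul_ite, mul_zero]
          rw [Finset.sum_comm]
          refine Finset.sum_congr rfl fun j _ => ?_
          have : ∀ J : ∀ ℓ', Fin (n ℓ'),
              (if e j = J then A ℓ i (J ℓ) * y j else 0)
                = (if e j = J then A ℓ i j * y j else 0) := by
            intro J
            by_cases h : e j = J
            · rw [if_pos h, if_pos h, ← h, he]
            · rw [if_neg h, if_neg h]
          rw [Finset.sum_congr rfl fun J _ => this J]
          simp
    simp only [secBar, secA, iSup]
    rw [hrange]
  refine ⟨fun x _ ℓ => key x ℓ, fun xstar => ?_⟩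
  have h : secA A = secBar A := funext fun x => funext fun ℓ => (key x ℓ).symm
  rw [IsPOSSwrt, IsPOSSwrt, h]
end
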